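/- arXiv:2406.05524 — 4 statements merged into one kernel-verified Lean document; each statement's English description precedes it below -/
import Mathlib

section
/- Let q be a prime power, let κ = 𝔽_q[T]/(π) be the residue field of 𝔽_q[T] at a monic irreducible polynomial π, let t ∈ κ be the image of T, and let K be an algebraic closure of κ. Let c := t·X + X^q ∈ K[X] be the Carlitz polynomial. If u ∈ K[X] is 𝔽_q-linear (i.e., every monomial occurring in u has degree a power of q, so u = Σ_{i=0}^m a_i X^{q^i}) and u and c commute under composition, u ∘ c = c ∘ u, then there exists a unique polynomial b = Σ_i b_i T^i ∈ 𝔽_q[T] such that u = Σ_i b_i · c^{∘i}, where c^{∘i} denotes the i-fold composition of c with itself (c^{∘0} = X). (In other words, the structure map 𝔽_q[T] → End_{κ̄}(C) of the Carlitz module is an isomorphism.) -/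
/-!
The polynomials `Σ bⱼ c^{∘j}` are `𝔽_q`-linear and commute with `c`, and `c^{∘j}` is monic of
degree `q^j`, so `b` can be read off from the top coefficient: this gives uniqueness. For
existence, comparing leading coefficients in `u ∘ c = c ∘ u` shows that the leading coefficient
`a` of `u` (sitting in degree `q^m`) satisfies `a^q = a`, i.e. `a ∈ 𝔽_q`. Since `c` is
`𝔽_q`-linear, `u - a c^{∘m}` is again an `𝔽_q`-linear polynomial commuting with `c`, of
smaller degree, and we conclude by induction on the degree.
-/

open Polynomial

section QLinear

variable {R : Type*} [Semiring R] (q : ℕ)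

noncomputable def qLinear : Submodule R R[X] :=
  Submodule.span R (Set.range fun i : ℕ => (X : R[X]) ^ q ^ i)

variable {q}

theorem sum_C_mul_X_pow_pow_mem_qLinear (s : Finset ℕ) (a : ℕ → R) :
    ∑ j ∈ s, C (a j) * X ^ q ^ j ∈ qLinear q :=
  Submodule.sum_mem _ fun j _ => by
    rw [← smul_eq_C_mul]
    exact Submodule.smul_mem _ _ (Submodule.subset_span ⟨j, rfl⟩)

theorem coeff_eq_zero_of_mem_qLinear {u : R[X]} (hu : u ∈ qLinear q) {n : ℕ}
    (hn : n ∉ Set.range (q ^ ·)) : u.coeff n = 0 := by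
  induction hu using Submodule.span_induction with
  | mem w hw =>
    obtain ⟨i, rfl⟩ := hw
    rw [coeff_X_pow, if_neg (fun h => hn ⟨i, h.symm⟩)]
  | zero => rfl
  | add v w _ _ hv hw => rw [coeff_add, hv, hw, add_zero]
  | smul a w _ hw => rw [coeff_smul, hw, smul_zero]

theorem exists_natDegree_eq_pow_of_mem_qLinear {u : R[X]} (hu : u ∈ qLinear q) (h0 : u ≠ 0) :
    ∃ m, u.natDegree = q ^ m := by
  by_contra! h
  exact h0 (leadingCoeff_eq_zero.mp
    (coeff_eq_zero_of_mem_qLinear hu fun ⟨m, hm⟩ => h m hm.symm))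

end QLinear

section FiniteField

variable {F K : Type*} [Field F] [Fintype F] [CommRing K] [Algebra F K]

theorem exists_algebraMap_eq_of_pow_card_eq [IsDomain K] {x : K} (hx : x ^ Fintype.card F = x) :
    ∃ y : F, algebraMap F K y = x := by
  have hprod : (X ^ Fintype.card F - X : F[X]) = ∏ a : F, (X - C a) := by
    rw [Finset.prod_eq_multiset_prod, ← FiniteField.roots_X_pow_card_sub_X]
    refine (prod_multiset_X_sub_C_of_monic_of_roots_card_eq ?_ ?_).symm
    · exact monic_X_pow_sub (by simpa using Fintype.one_lt_card)
    · rw [FiniteField.roots_X_pow_card_sub_X, FiniteField.X_pow_card_sub_X_natDegree_eq F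
        Fintype.one_lt_card, Finset.card_val, Finset.card_univ]
  have hroot := congrArg (aeval x) hprod
  simp only [map_sub, map_pow, aeval_X, hx, sub_self, map_prod, aeval_C] at hroot
  obtain ⟨y, -, hy⟩ := Finset.prod_eq_zero_iff.mp hroot.symm
  exact ⟨y, (sub_eq_zero.mp hy).symm⟩

theorem add_pow_card {R : Type*} [CommRing R] [Algebra F R] (x y : R) :
    (x + y) ^ Fintype.card F = x ^ Fintype.card F + y ^ Fintype.card F :=
  map_add (FiniteField.frobeniusAlgHom F R) x y

theorem pow_card_mem_qLinear {u : K[X]} (hu : u ∈ qLinear (Fintype.card F)) :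
    u ^ Fintype.card F ∈ qLinear (Fintype.card F) := by
  induction hu using Submodule.span_induction with
  | mem w hw =>
    obtain ⟨i, rfl⟩ := hw
    rw [← pow_mul, ← pow_succ]
    exact Submodule.subset_span ⟨i + 1, rfl⟩
  | zero => rw [zero_pow Fintype.card_ne_zero]; exact Submodule.zero_mem _
  | add v w _ _ hv hw =>
    rw [add_pow_card]
    exact Submodule.add_mem _ hv hw
  | smul a w _ hw => rw [_root_.smul_pow]; exact Submodule.smul_mem _ _ hw

end FiniteField

theorem natDegree_sub_C_leadingCoeff_mul_lt {R : Type*} [Ring R] [IsDomain R] {u P : R[X]}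
    (hu : 0 < u.natDegree) (hP : P.Monic) (hdeg : P.natDegree = u.natDegree) :
    (u - C u.leadingCoeff * P).natDegree < u.natDegree := by
  have hu0 : u ≠ 0 := ne_zero_of_natDegree_gt hu
  have hdeg' : u.degree = (C u.leadingCoeff * P).degree := by
    rw [degree_C_mul (leadingCoeff_ne_zero.mpr hu0), degree_eq_natDegree hP.ne_zero,
      degree_eq_natDegree hu0, hdeg]
  have hlc : u.leadingCoeff = (C u.leadingCoeff * P).leadingCoeff := by
    rw [leadingCoeff_mul, leadingCoeff_C, hP.leadingCoeff, mul_one]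
  obtain hv | hv := eq_or_ne (u - C u.leadingCoeff * P) 0
  · rwa [hv, natDegree_zero]
  · exact natDegree_lt_natDegree hv (degree_sub_lt_left hdeg' hu0 hlc)

section IterateComp

variable {R : Type*} [CommSemiring R]

theorem leadingCoeff_pow_eq_of_comp_comm [NoZeroDivisors R] {c u : R[X]} (hc : c.Monic)
    (hc0 : c.natDegree ≠ 0) (hu0 : u.natDegree ≠ 0) (h : u.comp c = c.comp u) :
    u.leadingCoeff ^ c.natDegree = u.leadingCoeff := by
  have := congrArg leadingCoeff h
  rwa [leadingCoeff_comp hc0, leadingCoeff_comp hu0, hc.leadingCoeff, one_pow, mul_one, one_mul,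
    eq_comm] at this

variable (c : R[X])

theorem iterate_comp_comp_comm (m : ℕ) :
    ((fun g => g.comp c)^[m] X).comp c = c.comp ((fun g => g.comp c)^[m] X) := by
  induction m with
  | zero => simp
  | succ m ih => rw [Function.iterate_succ_apply', ih, comp_assoc, ih]

variable {c}

theorem monic_iterate_comp (hc : c.Monic) (hc0 : c.natDegree ≠ 0) (m : ℕ) :
    ((fun g => g.comp c)^[m] X).Monic := by
  induction m with
  | zero => exact monic_X
  | succ m ih => rw [Function.iterate_succ_apply']; exact ih.comp hc hc0

theorem natDegree_iterate_comp_X [NoZeroDivisors R] [Nontrivial R] (m : ℕ) :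
    ((fun g => g.comp c)^[m] X).natDegree = c.natDegree ^ m := by
  induction m with
  | zero => simp
  | succ m ih => rw [Function.iterate_succ_apply', natDegree_comp, ih, pow_succ]

end IterateComp

section IterateCompLinearMap

variable (F : Type*) {K : Type*} [Field F] [CommRing K] [Algebra F K]

noncomputable def iterateCompLinearMap (c : K[X]) : F[X] →ₗ[F] K[X] :=
  lsum fun j => LinearMap.toSpanSingleton F K[X] ((fun g => g.comp c)^[j] X)

variable {F} {c : K[X]}

theorem iterateCompLinearMap_apply (b : F[X]) :
    iterateCompLinearMap F c b = ∑ j ∈ Finset.range (b.natDegree + 1),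
      C (algebraMap F K (b.coeff j)) * ((fun g => g.comp c)^[j] X) := by
  rw [iterateCompLinearMap, lsum_apply, sum_over_range _ fun _ => map_zero _]
  simp only [LinearMap.toSpanSingleton_apply, ← smul_eq_C_mul, algebraMap_smul]

theorem iterateCompLinearMap_monomial (m : ℕ) (y : F) :
    iterateCompLinearMap F c (monomial m y) =
      C (algebraMap F K y) * ((fun g => g.comp c)^[m] X) := by
  rw [iterateCompLinearMap, lsum_apply, sum_monomial_index _ _ (zero_smul F _),
    LinearMap.toSpanSingleton_apply, ← smul_eq_C_mul, algebraMap_smul]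

theorem iterateCompLinearMap_mem {S : Submodule F K[X]}
    (hS : ∀ j, (fun g => g.comp c)^[j] X ∈ S) (b : F[X]) : iterateCompLinearMap F c b ∈ S := by
  rw [iterateCompLinearMap, lsum_apply]
  exact Submodule.sum_mem _ fun j _ => Submodule.smul_mem _ _ (hS j)

theorem coeff_iterateCompLinearMap_pow_natDegree [IsDomain K] (hc : c.Monic) (hc1 : 1 < c.natDegree)
    (b : F[X]) :
    (iterateCompLinearMap F c b).coeff (c.natDegree ^ b.natDegree) =
      algebraMap F K b.leadingCoeff := by
  rw [iterateCompLinearMap, lsum_apply, Polynomial.sum, finsetSum_coeff,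
    Finset.sum_eq_single b.natDegree]
  · rw [LinearMap.toSpanSingleton_apply, coeff_smul, ← natDegree_iterate_comp_X,
      (monic_iterate_comp hc (by omega) _).coeff_natDegree, Algebra.smul_def, mul_one,
      leadingCoeff]
  · intro j hj hjn
    have hlt : c.natDegree ^ j < c.natDegree ^ b.natDegree :=
      Nat.pow_lt_pow_right hc1 (lt_of_le_of_ne (le_natDegree_of_mem_supp j hj) hjn)
    rw [LinearMap.toSpanSingleton_apply, coeff_smul,
      coeff_eq_zero_of_natDegree_lt (p := (fun g => g.comp c)^[j] X)
        ((natDegree_iterate_comp_X j).trans_lt hlt), smul_zero]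
  · intro h
    rw [notMem_support_iff.mp h, map_zero, coeff_zero]

theorem iterateCompLinearMap_injective [IsDomain K] (hc : c.Monic) (hc1 : 1 < c.natDegree) :
    Function.Injective (iterateCompLinearMap F c) := by
  refine (injective_iff_map_eq_zero _).mpr fun b hb => ?_
  have := coeff_iterateCompLinearMap_pow_natDegree hc hc1 b
  rwa [hb, coeff_zero, eq_comm, map_eq_zero, leadingCoeff_eq_zero] at this

end IterateCompLinearMap

section CarlitzPoly

variable {R : Type*} [CommSemiring R]

noncomputable def carlitzPoly (q : ℕ) (s : R) : R[X] := C s * X + X ^ q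

variable {q : ℕ} (s : R)

theorem carlitzPoly_comp (w : R[X]) : (carlitzPoly q s).comp w = C s * w + w ^ q := by
  simp [carlitzPoly]

variable [Nontrivial R]

theorem natDegree_carlitzPoly (hq : 1 < q) : (carlitzPoly q s).natDegree = q := by
  have hlt : (C s * X).natDegree < (X ^ q : R[X]).natDegree := by
    rw [natDegree_X_pow]
    exact ((natDegree_C_mul_le s X).trans natDegree_X_le).trans_lt hq
  rw [carlitzPoly, natDegree_add_eq_right_of_natDegree_lt hlt, natDegree_X_pow]

theorem monic_carlitzPoly (hq : 1 < q) : (carlitzPoly q s).Monic := by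
  refine (monic_X_pow _).add_of_right ((degree_C_mul_X_le s).trans_lt ?_)
  rw [degree_X_pow]
  exact_mod_cast hq

end CarlitzPoly

section CarlitzCentralizer

variable (F : Type*) {K : Type*} [Field F] [Fintype F] [CommRing K] [Algebra F K] (s : K)

def carlitzCentralizer : Submodule F K[X] where
  carrier := {u | u.comp (carlitzPoly (Fintype.card F) s) = (carlitzPoly (Fintype.card F) s).comp u}
  add_mem' {u v} hu hv := by
    simp only [Set.mem_ofPred_eq, add_comp, carlitzPoly_comp, add_pow_card] at *
    rw [hu, hv]
    ring
  zero_mem' := by simp [carlitzPoly_comp, zero_pow Fintype.card_ne_zero]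
  smul_mem' a u hu := by
    simp only [Set.mem_ofPred_eq, smul_comp, carlitzPoly_comp, _root_.smul_pow,
      FiniteField.pow_card] at *
    rw [hu, smul_add, mul_smul_comm]

variable {F}

theorem iterate_comp_mem_carlitzCentralizer (m : ℕ) :
    (fun g => g.comp (carlitzPoly (Fintype.card F) s))^[m] X ∈ carlitzCentralizer F s :=
  iterate_comp_comp_comm _ m

theorem iterate_comp_mem_qLinear (m : ℕ) :
    (fun g => g.comp (carlitzPoly (Fintype.card F) s))^[m] X ∈ qLinear (Fintype.card F) := by
  induction m with
  | zero => exact Submodule.subset_span ⟨0, by simp⟩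
  | succ m ih =>
    rw [Function.iterate_succ_apply', iterate_comp_comp_comm, carlitzPoly_comp, ← smul_eq_C_mul]
    exact Submodule.add_mem _ (Submodule.smul_mem _ _ ih) (pow_card_mem_qLinear ih)

theorem exists_iterateCompLinearMap_eq [IsDomain K] {u : K[X]}
    (hlin : u ∈ qLinear (Fintype.card F)) (hcomm : u ∈ carlitzCentralizer F s) :
    ∃ b : F[X], iterateCompLinearMap F (carlitzPoly (Fintype.card F) s) b = u := by
  have hq := Fintype.one_lt_card (α := F)
  set c := carlitzPoly (Fintype.card F) s
  have hc : c.Monic := monic_carlitzPoly s hq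
  have hc0 : c.natDegree ≠ 0 := by rw [natDegree_carlitzPoly s hq]; omega
  induction hn : u.natDegree using Nat.strong_induction_on generalizing u with
  | _ n ih =>
  obtain rfl | hu0 := eq_or_ne u 0
  · exact ⟨0, map_zero _⟩
  obtain ⟨m, hm⟩ := exists_natDegree_eq_pow_of_mem_qLinear hlin hu0
  have hu_pos : 0 < u.natDegree := by rw [hm]; positivity
  have hfix := leadingCoeff_pow_eq_of_comp_comm hc hc0 hu_pos.ne' hcomm
  rw [natDegree_carlitzPoly s hq] at hfix
  obtain ⟨y, hy⟩ := exists_algebraMap_eq_of_pow_card_eq hfix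
  set w := iterateCompLinearMap F c (monomial m y) with hw
  rw [iterateCompLinearMap_monomial, hy] at hw
  have hlt : (u - w).natDegree < n := hn ▸ hw ▸ natDegree_sub_C_leadingCoeff_mul_lt hu_pos
    (monic_iterate_comp hc hc0 m) (by rw [natDegree_iterate_comp_X, natDegree_carlitzPoly s hq, hm])
  have hw_lin : w ∈ qLinear (Fintype.card F) :=
    iterateCompLinearMap_mem (S := (qLinear _).restrictScalars F) (iterate_comp_mem_qLinear s) _
  have hw_comm : w ∈ carlitzCentralizer F s :=
    iterateCompLinearMap_mem (iterate_comp_mem_carlitzCentralizer s) _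
  obtain ⟨b, hb⟩ := ih _ hlt (sub_mem hlin hw_lin) (sub_mem hcomm hw_comm) rfl
  exact ⟨b + monomial m y, by rw [map_add, hb, sub_add_cancel]⟩

theorem existsUnique_iterateCompLinearMap_eq [IsDomain K] {u : K[X]}
    (hlin : u ∈ qLinear (Fintype.card F)) (hcomm : u ∈ carlitzCentralizer F s) :
    ∃! b : F[X], iterateCompLinearMap F (carlitzPoly (Fintype.card F) s) b = u := by
  have hq := Fintype.one_lt_card (α := F)
  obtain ⟨b, hb⟩ := exists_iterateCompLinearMap_eq s hlin hcomm
  refine ⟨b, hb, fun b' hb' => iterateCompLinearMap_injective (monic_carlitzPoly s hq) ?_ ?_⟩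
  · rwa [natDegree_carlitzPoly s hq]
  · rw [hb, hb']

end CarlitzCentralizer

theorem stmt_0_general (q : ℕ)
    (Fq : Type) [Field Fq] [Fintype Fq] (hcard : Fintype.card Fq = q)
    (κ : Type) [Field κ] (res : Polynomial Fq →+* κ)
    (K : Type) [Field K] [Algebra κ K]
    (t : κ)
    (c : Polynomial K) (hc : c = C (algebraMap κ K t) * X + X ^ q)
    (u : Polynomial K)
    (hlin : ∃ (m : ℕ) (a : ℕ → K),
      u = ∑ j ∈ Finset.range (m + 1), C (a j) * X ^ q ^ j)
    (hcomm : u.comp c = c.comp u) :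
    ∃! b : Polynomial Fq,
      u = ∑ j ∈ Finset.range (b.natDegree + 1),
        C (algebraMap κ K (res (C (b.coeff j)))) * ((fun g => g.comp c)^[j] X) := by
  let : Algebra Fq K := ((algebraMap κ K).comp (res.comp C)).toAlgebra
  subst hcard hc
  obtain ⟨m, a, rfl⟩ := hlin
  have key := existsUnique_iterateCompLinearMap_eq _ (sum_C_mul_X_pow_pow_mem_qLinear _ a) hcomm
  simp only [iterateCompLinearMap_apply, eq_comm] at key
  exact key

/-- The structure map `𝔽_q[T] → End_{κ̄}(C)` of the Carlitz module is an isomorphism: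
every 𝔽_q-linear polynomial over an algebraic closure `K` of the residue field
`κ = 𝔽_q[T]/(π)` commuting with the Carlitz polynomial `c = t·X + X^q` is of the form
`Σ b_i c^{∘i}` for a unique `b ∈ 𝔽_q[T]`. -/
theorem stmt_0 (p e q : ℕ) (hp : p.Prime) (he : 0 < e) (hq : q = p ^ e)
    (Fq : Type) [Field Fq] [Fintype Fq] (hcard : Fintype.card Fq = q)
    (π : Polynomial Fq) (hmonic : π.Monic) (hirr : Irreducible π)
    (κ : Type) [Field κ] (res : Polynomial Fq →+* κ) (hres : Function.Surjective res)
    (hker : RingHom.ker res = Ideal.span {π})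
    (K : Type) [Field K] [Algebra κ K] [IsAlgClosure κ K]
    (t : κ) (ht : t = res X)
    (c : Polynomial K) (hc : c = C (algebraMap κ K t) * X + X ^ q)
    (u : Polynomial K)
    (hlin : ∃ (m : ℕ) (a : ℕ → K),
      u = ∑ j ∈ Finset.range (m + 1), C (a j) * X ^ q ^ j)
    (hcomm : u.comp c = c.comp u) :
    ∃! b : Polynomial Fq,
      u = ∑ j ∈ Finset.range (b.natDegree + 1),
        C (algebraMap κ K (res (C (b.coeff j)))) * ((fun g => g.comp c)^[j] X) :=
  stmt_0_general q Fq hcard κ res K t c hc u hlin hcomm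
end

section
/- Let q be a prime power, let K be a field of characteristic p containing 𝔽_q, let t ∈ K, and set c := t·X + X^q ∈ K[X]. Suppose u = Σ_{i=0}^m a_i X^{q^i} ∈ K[X] with a_m ≠ 0 satisfies u ∘ c = c ∘ u (composition of polynomials). Then the leading coefficient satisfies a_m^q = a_m, i.e., a_m ∈ 𝔽_q. -/
open Polynomial

/-! Compare the coefficients of `X ^ q ^ (m + 1)` in `u ∘ c = c ∘ u`. Since `q`-th powers are
additive, `u ∘ c = Σ aⱼ (t ^ q ^ j X ^ q ^ j + X ^ q ^ (j + 1))`, where that coefficient is `a m`,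
while `c ∘ u = t u + u ^ q = t u + Σ aⱼ ^ q X ^ q ^ (j + 1)`, where it is `a m ^ q`. -/

section
variable {R : Type*} [CommSemiring R]

theorem coeff_sum_C_mul_X_pow_of_injective (s : Finset ℕ) (a : ℕ → R) {g : ℕ → ℕ}
    (hg : Function.Injective g) (i : ℕ) :
    (∑ j ∈ s, C (a j) * X ^ g j).coeff (g i) = if i ∈ s then a i else 0 := by
  simp only [finsetSum_coeff, coeff_C_mul_X_pow, hg.eq_iff, Finset.sum_ite_eq]

variable {p : ℕ} [ExpChar R p]

theorem sum_C_mul_X_pow_pow_expChar_pow (s : Finset ℕ) (a : ℕ → R) (g : ℕ → ℕ) (n : ℕ) :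
    (∑ j ∈ s, C (a j) * X ^ g j) ^ p ^ n = ∑ j ∈ s, C (a j ^ p ^ n) * X ^ (g j * p ^ n) := by
  have := map_sum (iterateFrobenius R[X] p n) (fun j => C (a j) * X ^ g j) s
  simpa only [iterateFrobenius_def, mul_pow, ← C_pow, ← pow_mul] using this

theorem C_mul_X_add_X_pow_pow_pow (t : R) {e q : ℕ} (hq : q = p ^ e) (j : ℕ) :
    (C t * X + X ^ q) ^ q ^ j = C (t ^ q ^ j) * X ^ q ^ j + X ^ q ^ (j + 1) := by
  have hqj : q ^ j = p ^ (e * j) := by rw [hq, pow_mul]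
  rw [hqj, add_pow_expChar_pow, ← hqj, mul_pow, ← C_pow, ← pow_mul, pow_succ']

theorem sum_C_mul_X_pow_pow_comp (s : Finset ℕ) (a : ℕ → R) (t : R) {e q : ℕ} (hq : q = p ^ e) :
    (∑ j ∈ s, C (a j) * X ^ q ^ j).comp (C t * X + X ^ q) =
      ∑ j ∈ s, C (a j * t ^ q ^ j) * X ^ q ^ j + ∑ j ∈ s, C (a j) * X ^ q ^ (j + 1) := by
  simp only [sum_comp, mul_comp, C_comp, X_pow_comp, ← Finset.sum_add_distrib]
  refine Finset.sum_congr rfl fun j _ => ?_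
  rw [C_mul_X_add_X_pow_pow_pow t hq, C_mul, mul_add, mul_assoc]

theorem comp_sum_C_mul_X_pow_pow (s : Finset ℕ) (a : ℕ → R) (t : R) {e q : ℕ} (hq : q = p ^ e) :
    (C t * X + X ^ q).comp (∑ j ∈ s, C (a j) * X ^ q ^ j) =
      C t * ∑ j ∈ s, C (a j) * X ^ q ^ j + ∑ j ∈ s, C (a j ^ q) * X ^ q ^ (j + 1) := by
  rw [add_comp, mul_comp, C_comp, X_comp, X_pow_comp, hq, sum_C_mul_X_pow_pow_expChar_pow,
    ← hq]
  simp only [← pow_succ]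
end

theorem stmt_1_general (p e q : ℕ) (hp : p.Prime) (he : 0 < e) (hq : q = p ^ e)
    (K : Type) [Field K] [CharP K p]
    (t : K) (c : Polynomial K) (hc : c = C t * X + X ^ q)
    (m : ℕ) (a : ℕ → K)
    (u : Polynomial K) (hu : u = ∑ j ∈ Finset.range (m + 1), C (a j) * X ^ q ^ j)
    (hcomm : u.comp c = c.comp u) :
    a m ^ q = a m := by
  have hp' : Fact p.Prime := ⟨hp⟩
  have hq2 : 2 ≤ q := hq ▸ Nat.le_self_pow he.ne' p |>.trans' hp.two_le
  have hinj : Function.Injective (q ^ · : ℕ → ℕ) := Nat.pow_right_injective hq2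
  have hinj' : Function.Injective (fun j : ℕ => q ^ (j + 1)) := hinj.comp (add_left_injective 1)
  have key := congrArg (coeff · (q ^ (m + 1))) hcomm
  simp only [hu, hc, sum_C_mul_X_pow_pow_comp _ _ _ hq, comp_sum_C_mul_X_pow_pow _ _ _ hq,
    coeff_add, coeff_C_mul] at key
  rw [coeff_sum_C_mul_X_pow_of_injective _ _ hinj, coeff_sum_C_mul_X_pow_of_injective _ _ hinj,
    coeff_sum_C_mul_X_pow_of_injective _ _ hinj' m,
    coeff_sum_C_mul_X_pow_of_injective _ _ hinj' m] at key
  simpa using key.symm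

/-- If an 𝔽_q-linear polynomial `u = Σ_{i≤m} a_i X^{q^i}` over a field `K` of
characteristic `p` containing `𝔽_q` commutes (under composition) with
`c = t·X + X^q`, then its leading coefficient satisfies `a_m^q = a_m`,
i.e. lies in `𝔽_q`. -/
theorem stmt_1 (p e q : ℕ) (hp : p.Prime) (he : 0 < e) (hq : q = p ^ e)
    (Fq : Type) [Field Fq] [Fintype Fq] (hcard : Fintype.card Fq = q)
    (K : Type) [Field K] [CharP K p] [Algebra Fq K]
    (t : K) (c : Polynomial K) (hc : c = C t * X + X ^ q)
    (m : ℕ) (a : ℕ → K) (ha : a m ≠ 0)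
    (u : Polynomial K) (hu : u = ∑ j ∈ Finset.range (m + 1), C (a j) * X ^ q ^ j)
    (hcomm : u.comp c = c.comp u) :
    a m ^ q = a m :=
  stmt_1_general p e q hp he hq K t c hc m a u hu hcomm
end

section
/- Let q be a prime power, let r ≥ 2 be an integer, let c ∈ 𝔽_q, let 𝔽̄_q be an algebraic closure of 𝔽_q, and let L := 𝔽̄_q((t)) be the field of formal Laurent series over 𝔽̄_q. Set T := t⁻¹ ∈ L. Then the polynomial G(Y) := Y + (T − c)⁻¹·Y^q + Y^{q^r} ∈ L[Y] splits completely over L, i.e., G factors into linear factors in L[Y]. -/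
/-! `(T - c)⁻¹ = t (1 - c t)⁻¹` lies in `t 𝔽̄_q⟦t⟧`, so `G` is defined over the Henselian ring
`𝔽̄_q⟦t⟧` and reduces modulo `t` to `Y + Y^{q^r}`, which is separable since its derivative is `1`.
Hensel's lemma lifts its roots one at a time, so `G` splits already over `𝔽̄_q⟦t⟧`. -/

open Polynomial

universe u

instance PowerSeries.henselianLocalRing (K : Type*) [Field K] :
    HenselianLocalRing (PowerSeries K) where
  is_henselian f hf a₀ h₁ h₂ := by
    rw [PowerSeries.maximalIdeal_eq_span_X] at h₁ ⊢
    exact HenselianRing.is_henselian f hf a₀ h₁ (h₂.map _)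

theorem Polynomial.Splits.of_splits_map_of_separable {R k : Type u} [CommRing R]
    [HenselianLocalRing R] [Field k] (φ : R →+* k) (hφ : Function.Surjective φ) {f : R[X]}
    (hmonic : f.Monic) (hsep : (f.map φ).Separable) (hsplit : (f.map φ).Splits) : f.Splits := by
  induction hdeg : f.natDegree generalizing f with
  | zero => rw [hmonic.natDegree_eq_zero.mp hdeg]; exact Splits.one
  | succ n ih =>
    have hdeg' : (f.map φ).degree ≠ 0 := by
      rw [degree_eq_natDegree (hmonic.map φ).ne_zero, hmonic.natDegree_map, hdeg]
      exact_mod_cast n.succ_ne_zero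
    obtain ⟨b, hb⟩ := hsplit.exists_eval_eq_zero hdeg'
    have hb' : (f.map φ).derivative.eval b ≠ 0 := by
      simpa using hsep.aeval_derivative_ne_zero (x := b) (by simpa using hb)
    have hensel := ((HenselianLocalRing.TFAE R).out 0 2).mp ‹_›
    obtain ⟨a, ha, -⟩ := hensel φ hφ f hmonic b
      (by rwa [← eval_map]) (by rwa [← eval_map, ← derivative_map])
    set g := f /ₘ (X - C a)
    have hfg : (X - C a) * g = f := mul_divByMonic_eq_iff_isRoot.mpr ha
    have hgmonic : g.Monic := (monic_X_sub_C a).of_mul_monic_left (hfg ▸ hmonic)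
    have hdvd : g.map φ ∣ f.map φ := hfg ▸ (Polynomial.map_mul φ ▸ dvd_mul_left _ _)
    rw [← hfg]
    refine (Splits.X_sub_C a).mul (ih hgmonic (hsep.of_dvd hdvd)
      (hsplit.of_dvd (hmonic.map φ).ne_zero hdvd) ?_)
    rw [← hfg, (monic_X_sub_C a).natDegree_mul hgmonic, natDegree_X_sub_C] at hdeg
    omega

theorem splits_X_add_C_mul_X_pow_add_X_pow {K : Type u} [Field K] [IsAlgClosed K]
    {a : PowerSeries K} (ha : PowerSeries.constantCoeff a = 0) {m n : ℕ} (hmn : m < n)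
    (hn : (n : K) = 0) :
    (X + C a * X ^ m + X ^ n : (PowerSeries K)[X]).Splits := by
  have hn1 : 1 < n := by
    by_contra! h
    interval_cases n <;> simp_all
  have hlow : (X + C a * X ^ m : (PowerSeries K)[X]).degree < n :=
    (degree_add_le _ _).trans_lt <| max_lt (by rw [degree_X]; exact_mod_cast hn1)
      ((degree_C_mul_X_pow_le _ _).trans_lt (by exact_mod_cast hmn))
  have hred : (X + C a * X ^ m + X ^ n : (PowerSeries K)[X]).map PowerSeries.constantCoeff =
      X + X ^ n := by
    simp [ha]
  refine Splits.of_splits_map_of_separable _ PowerSeries.constantCoeff_surj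
    (add_comm (X + C a * X ^ m) (X ^ n) ▸ monic_X_pow_add hlow) ?_ (IsAlgClosed.splits _)
  rw [hred, separable_def, derivative_add, derivative_X, derivative_X_pow, hn, C_0, zero_mul,
    add_zero]
  exact isCoprime_one_right

theorem HahnSeries.ofPowerSeries_X_mul_inv_one_sub_C_mul_X {K : Type*} [Field K] (c : K) :
    ofPowerSeries ℤ K (PowerSeries.X * (1 - PowerSeries.C c * PowerSeries.X)⁻¹) =
      ((single 1 1 : LaurentSeries K)⁻¹ - C c)⁻¹ := by
  set u : PowerSeries K := 1 - PowerSeries.C c * PowerSeries.X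
  have hu : ofPowerSeries ℤ K u * ofPowerSeries ℤ K u⁻¹ = 1 := by
    rw [← map_mul, PowerSeries.mul_inv_cancel u (by simp [u]), map_one]
  have ht : (single 1 1 : LaurentSeries K) ≠ 0 := single_ne_zero one_ne_zero
  refine (inv_eq_of_mul_eq_one_right ?_).symm
  calc ((single 1 1 : LaurentSeries K)⁻¹ - C c) * ofPowerSeries ℤ K (PowerSeries.X * u⁻¹)
      = ((single 1 1)⁻¹ * single 1 1 - C c * single 1 1) * ofPowerSeries ℤ K u⁻¹ := by
        rw [map_mul, ofPowerSeries_X]; ring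
    _ = ofPowerSeries ℤ K u * ofPowerSeries ℤ K u⁻¹ := by
        rw [inv_mul_cancel₀ ht, map_sub, (ofPowerSeries ℤ K).map_one, map_mul, ofPowerSeries_C,
          ofPowerSeries_X]
    _ = 1 := hu

theorem stmt_6_general (q : ℕ)
    (Fq : Type) [Field Fq] [Fintype Fq] (hcard : Fintype.card Fq = q)
    (r : ℕ) (hr : 2 ≤ r) (c : Fq)
    (t T : LaurentSeries (AlgebraicClosure Fq))
    (ht : t = HahnSeries.single (1 : ℤ) 1) (hT : T = t⁻¹)
    (G : Polynomial (LaurentSeries (AlgebraicClosure Fq)))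
    (hG : G = X + C ((T - HahnSeries.C (algebraMap Fq (AlgebraicClosure Fq) c))⁻¹) * X ^ q
      + X ^ q ^ r) :
    G.Splits := by
  have hq : 1 < q := hcard ▸ Fintype.one_lt_card
  have hqr : ((q ^ r : ℕ) : AlgebraicClosure Fq) = 0 := by
    rw [← hcard, ← map_natCast (algebraMap Fq _), Nat.cast_pow, FiniteField.cast_card_eq_zero,
      zero_pow (by omega), map_zero]
  have hsplit := (splits_X_add_C_mul_X_pow_add_X_pow
    (a := PowerSeries.X * (1 - PowerSeries.C (algebraMap Fq _ c) * PowerSeries.X)⁻¹) (m := q)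
    (by simp) (by simpa using Nat.pow_lt_pow_right hq hr) hqr).map
    (HahnSeries.ofPowerSeries ℤ (AlgebraicClosure Fq))
  rw [hG, hT, ht, ← HahnSeries.ofPowerSeries_X_mul_inv_one_sub_C_mul_X]
  simpa only [Polynomial.map_add, Polynomial.map_mul, Polynomial.map_pow, map_X, map_C] using hsplit

/-- Over the Laurent series field `L = 𝔽̄_q((t))`, with `T = t⁻¹`, the polynomial
`G(Y) = Y + (T−c)⁻¹·Y^q + Y^{q^r}` splits completely. This expresses that all
`(T−c)`-torsion of the Drinfeld module `φ_T = T + τ + (T−c)τ^r` lies in the maximal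
unramified extension of `F_∞`. -/
theorem stmt_6 (p k q : ℕ) (hp : p.Prime) (hk : 0 < k) (hq : q = p ^ k)
    (Fq : Type) [Field Fq] [Fintype Fq] (hcard : Fintype.card Fq = q)
    (r : ℕ) (hr : 2 ≤ r) (c : Fq)
    (t T : LaurentSeries (AlgebraicClosure Fq))
    (ht : t = HahnSeries.single (1 : ℤ) 1) (hT : T = t⁻¹)
    (G : Polynomial (LaurentSeries (AlgebraicClosure Fq)))
    (hG : G = X + C ((T - HahnSeries.C (algebraMap Fq (AlgebraicClosure Fq) c))⁻¹) * X ^ q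
      + X ^ q ^ r) :
    G.Splits :=
  stmt_6_general q Fq hcard r hr c t T ht hT G hG
end

section
/- Let q be a prime power, let r ≥ 2 be an integer, let c ∈ 𝔽_q, let 𝔽̄_q be an algebraic closure of 𝔽_q, and let L := 𝔽̄_q((t)) be the field of formal Laurent series over 𝔽̄_q. Set T := t⁻¹ ∈ L and h(Y) := (T − c)·Y + Y^q + (T − c)·Y^{q^r} ∈ L[Y]. Then for every integer k ≥ 1, the k-fold composition h^{∘k} splits completely over L, i.e., h^{∘k} factors into linear factors in L[Y]. -/
/-!
For `z ∈ 𝔽̄_q⟦t⟧`, the polynomial `h - z` is `(T - c)` times a polynomial `G` over `𝔽̄_q⟦t⟧`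
which is monic because `(T - c)⁻¹ = t / (1 - c t)` lies in `t 𝔽̄_q⟦t⟧`. For the same reason
`G ≡ Y^{q^r} + Y (mod t)`, which is separable with `q^r` distinct roots in `𝔽̄_q`; by Hensel's
lemma each of them lifts to a root of `G` in `𝔽̄_q⟦t⟧`. So `h - z` splits over `L` with all roots
in `𝔽̄_q⟦t⟧`. Writing `h^{∘k} = lc · ∏ (Y - zᵢ)` gives `h^{∘(k+1)} = lc · ∏ (h - zᵢ)`, and
induction on `k` shows that every `h^{∘k}` splits with all roots in `𝔽̄_q⟦t⟧`.
-/

open Polynomial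
open scoped PowerSeries LaurentSeries

namespace Polynomial

variable {R : Type*} [CommRing R]

theorem monic_X_pow_add_C_mul_X_pow_add_X_sub_C {q N : ℕ} (hqN : q < N) (h1N : 1 < N)
    (b d : R) : (X ^ N + C b * X ^ q + X - C d).Monic := by
  monicity!
  rw [show max N (max q 1) = N by omega]
  simp [hqN.le, h1N.le, hqN.ne', h1N.ne]

variable [IsDomain R]

theorem Splits.comp_of_splits_sub_C {f g : R[X]} (hf : f.Splits)
    (hg : ∀ z ∈ f.roots, (g - C z).Splits) : (f.comp g).Splits := by
  rw [hf.eq_prod_roots, mul_comp, C_comp, multiset_prod_comp, Multiset.map_map]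
  refine (Splits.multisetProd fun p hp => ?_).C_mul _
  obtain ⟨z, hz, rfl⟩ := Multiset.mem_map.mp hp
  simpa using hg z hz

theorem mem_of_mem_roots_comp {S : Set R} {f g : R[X]} (hf : ∀ z ∈ f.roots, z ∈ S)
    (hg : ∀ z ∈ S, ∀ y ∈ (g - C z).roots, y ∈ S) {y : R} (hy : y ∈ (f.comp g).roots) :
    y ∈ S := by
  obtain ⟨hfg, hroot⟩ := mem_roots'.mp hy
  have hf0 : f ≠ 0 := by rintro rfl; simp at hfg
  have hz : g.eval y ∈ f.roots := (mem_roots hf0).mpr (by simpa [IsRoot, eval_comp] using hroot)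
  refine hg _ (hf _ hz) y (mem_roots'.mpr ⟨fun hgz => hfg ?_, by simp⟩)
  rw [sub_eq_zero.mp hgz, comp_C, (mem_roots hf0).mp hz, C_0]

theorem splits_iterate_comp_X {S : Set R} (h0 : (0 : R) ∈ S) {g : R[X]}
    (hg : ∀ z ∈ S, (g - C z).Splits ∧ ∀ y ∈ (g - C z).roots, y ∈ S) (k : ℕ) :
    ((fun p => p.comp g)^[k] X).Splits ∧ ∀ y ∈ ((fun p => p.comp g)^[k] X).roots, y ∈ S := by
  induction k with
  | zero => exact ⟨Splits.X, by simpa using h0⟩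
  | succ k ih =>
    rw [Function.iterate_succ_apply']
    exact ⟨ih.1.comp_of_splits_sub_C fun z hz => (hg z (ih.2 z hz)).1,
      fun y => mem_of_mem_roots_comp ih.2 fun z hz => (hg z hz).2⟩

end Polynomial

namespace PowerSeries

variable {K : Type*} [Field K]

theorem exists_isRoot_constantCoeff_eq {f : K⟦X⟧[X]} (hf : f.Monic) {α : K}
    (hα : (f.map constantCoeff).IsRoot α) (hα' : (f.map constantCoeff).derivative.eval α ≠ 0) :
    ∃ a, f.IsRoot a ∧ constantCoeff a = α := by
  have hcc : ∀ p : K⟦X⟧[X], constantCoeff (p.eval (C α)) = (p.map constantCoeff).eval α := by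
    intro p
    rw [eval_map, ← eval₂_at_apply, constantCoeff_C]
  obtain ⟨a, ha, haα⟩ := HenselianRing.is_henselian (I := Ideal.span {X}) f hf (C α)
    (by rw [Ideal.mem_span_singleton, X_dvd_iff, hcc]; exact hα)
    ((isUnit_iff_constantCoeff.mpr (by rw [hcc, ← derivative_map]; exact hα'.isUnit)).map _)
  refine ⟨a, ha, ?_⟩
  rwa [Ideal.mem_span_singleton, X_dvd_iff, map_sub, constantCoeff_C, sub_eq_zero] at haα

theorem splits_of_separable_map_constantCoeff [IsAlgClosed K] {f : K⟦X⟧[X]} (hf : f.Monic)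
    (hsep : (f.map constantCoeff).Separable) : f.Splits := by
  set f₀ := f.map constantCoeff
  have hlift : f₀.roots ≤ f.roots.map constantCoeff := by
    rw [Multiset.le_iff_subset (nodup_roots hsep)]
    intro α hα
    have hα₀ : f₀.IsRoot α := isRoot_of_mem_roots hα
    obtain ⟨a, ha, rfl⟩ := exists_isRoot_constantCoeff_eq hf hα₀
      (by simpa only [coe_aeval_eq_eval] using hsep.aeval_derivative_ne_zero (x := α) hα₀)
    exact Multiset.mem_map_of_mem _ ((mem_roots hf.ne_zero).mpr ha)
  refine splits_iff_card_roots.mpr (le_antisymm (card_roots' f) ?_)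
  calc f.natDegree = f₀.natDegree := (hf.natDegree_map _).symm
    _ = Multiset.card f₀.roots := (IsAlgClosed.splits f₀).natDegree_eq_card_roots
    _ ≤ Multiset.card f.roots := by simpa using Multiset.card_le_card hlift

end PowerSeries

namespace LaurentSeries

variable {K : Type*} [Field K]

theorem exists_constantCoeff_eq_zero_and_inv_single_one_sub_C_mul_eq_one (c : K) :
    ∃ β : K⟦X⟧, PowerSeries.constantCoeff β = 0 ∧
      ((HahnSeries.single 1 1 : K⸨X⸩)⁻¹ - HahnSeries.C c) * algebraMap K⟦X⟧ K⸨X⸩ β = 1 := by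
  set u : K⟦X⟧ := 1 - PowerSeries.C c * PowerSeries.X
  have hu : u * u⁻¹ = 1 := PowerSeries.mul_inv_cancel u (by simp [u])
  refine ⟨PowerSeries.X * u⁻¹, by simp, ?_⟩
  have hX : algebraMap K⟦X⟧ K⸨X⸩ PowerSeries.X = HahnSeries.single 1 1 := by
    rw [coe_algebraMap]; exact HahnSeries.ofPowerSeries_X
  have hC : algebraMap K⟦X⟧ K⸨X⸩ (PowerSeries.C c) = HahnSeries.C c := by
    rw [coe_algebraMap]; exact HahnSeries.ofPowerSeries_C c
  calc _ = algebraMap K⟦X⟧ K⸨X⸩ (u * u⁻¹) := by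
        simp only [u, map_mul, map_sub, map_one, hX, hC]
        field_simp
    _ = 1 := by rw [hu, map_one]

theorem splits_C_mul_X_add_X_pow_add_C_mul_X_pow_sub_C [IsAlgClosed K] {a : K⸨X⸩} {β : K⟦X⟧}
    (hβ : PowerSeries.constantCoeff β = 0) (haβ : a * algebraMap K⟦X⟧ K⸨X⸩ β = 1) {q N : ℕ}
    (hqN : q < N) (hN : (N : K) = 0) {z : K⸨X⸩} (hz : z ∈ Set.range (algebraMap K⟦X⟧ K⸨X⸩)) :
    (C a * X + X ^ q + C a * X ^ N - C z).Splits ∧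
      ∀ y ∈ (C a * X + X ^ q + C a * X ^ N - C z).roots, y ∈ Set.range (algebraMap K⟦X⟧ K⸨X⸩) := by
  obtain ⟨w, rfl⟩ := hz
  set G : K⟦X⟧[X] := X ^ N + C β * X ^ q + X - C (β * w)
  have h1N : 1 < N := by
    refine lt_of_le_of_ne (by omega) ?_
    rintro rfl
    simp at hN
  have hGmonic : G.Monic := monic_X_pow_add_C_mul_X_pow_add_X_sub_C hqN h1N β (β * w)
  have hG₀ : G.map PowerSeries.constantCoeff = X ^ N + X := by simp [G, hβ]
  have hGsep : (G.map PowerSeries.constantCoeff).Separable := by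
    rw [hG₀, separable_def]
    simpa [derivative_X_pow, hN] using isCoprime_one_right
  have hGsplits : G.Splits := PowerSeries.splits_of_separable_map_constantCoeff hGmonic hGsep
  have hfactor : C a * X + X ^ q + C a * X ^ N - C (algebraMap K⟦X⟧ K⸨X⸩ w) =
      C a * G.map (algebraMap K⟦X⟧ K⸨X⸩) := by
    have h : C a * C (algebraMap K⟦X⟧ K⸨X⸩ β) = 1 := by rw [← C_mul, haβ, C_1]
    simp only [G, Polynomial.map_sub, Polynomial.map_add, Polynomial.map_mul, Polynomial.map_pow,
      map_X, map_C, map_mul]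
    linear_combination (C (algebraMap K⟦X⟧ K⸨X⸩ w) - X ^ q) * h
  rw [hfactor, roots_C_mul _ (left_ne_zero_of_mul_eq_one haβ),
    hGsplits.roots_map_of_ne_zero (hGmonic.map _).ne_zero]
  refine ⟨(hGsplits.map _).C_mul a, fun y hy => ?_⟩
  obtain ⟨x, -, rfl⟩ := Multiset.mem_map.mp hy
  exact ⟨x, rfl⟩

end LaurentSeries

theorem stmt_8_general (q : ℕ)
    (Fq : Type) [Field Fq] [Fintype Fq] (hcard : Fintype.card Fq = q)
    (r : ℕ) (hr : 2 ≤ r) (c : Fq)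
    (t T : LaurentSeries (AlgebraicClosure Fq))
    (ht : t = HahnSeries.single (1 : ℤ) 1) (hT : T = t⁻¹)
    (h : Polynomial (LaurentSeries (AlgebraicClosure Fq)))
    (hh : h = C (T - HahnSeries.C (algebraMap Fq (AlgebraicClosure Fq) c)) * X
      + X ^ q
      + C (T - HahnSeries.C (algebraMap Fq (AlgebraicClosure Fq) c)) * X ^ q ^ r) :
    ∀ k : ℕ, 1 ≤ k →
      ((fun g => g.comp h)^[k] X).Splits := by
  intro k _
  subst hh hT ht
  have hq : 1 < q := hcard ▸ Fintype.one_lt_card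
  have hqN : q < q ^ r := by simpa using Nat.pow_lt_pow_right hq (by omega : 1 < r)
  have hN : ((q ^ r : ℕ) : AlgebraicClosure Fq) = 0 := by
    rw [Nat.cast_pow, ← map_natCast (algebraMap Fq _), ← hcard, FiniteField.cast_card_eq_zero,
      map_zero, zero_pow (by omega)]
  obtain ⟨β, hβ, haβ⟩ :=
    LaurentSeries.exists_constantCoeff_eq_zero_and_inv_single_one_sub_C_mul_eq_one
      (algebraMap Fq (AlgebraicClosure Fq) c)
  exact (splits_iterate_comp_X (by exact ⟨0, map_zero _⟩)
    (fun z hz => LaurentSeries.splits_C_mul_X_add_X_pow_add_C_mul_X_pow_sub_C hβ haβ hqN hN hz) k).1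

/-- Over `L = 𝔽̄_q((t))` with `T = t⁻¹`, every iterate `h^{∘k}` (`k ≥ 1`) of the
division polynomial `h(Y) = (T−c)·Y + Y^q + (T−c)·Y^{q^r}` splits completely over `L`;
i.e. each splitting field `L_k = F_∞(φ[𝔭^k])` is unramified over `F_∞`. -/
theorem stmt_8 (p e q : ℕ) (hp : p.Prime) (he : 0 < e) (hq : q = p ^ e)
    (Fq : Type) [Field Fq] [Fintype Fq] (hcard : Fintype.card Fq = q)
    (r : ℕ) (hr : 2 ≤ r) (c : Fq)
    (t T : LaurentSeries (AlgebraicClosure Fq))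
    (ht : t = HahnSeries.single (1 : ℤ) 1) (hT : T = t⁻¹)
    (h : Polynomial (LaurentSeries (AlgebraicClosure Fq)))
    (hh : h = C (T - HahnSeries.C (algebraMap Fq (AlgebraicClosure Fq) c)) * X
      + X ^ q
      + C (T - HahnSeries.C (algebraMap Fq (AlgebraicClosure Fq) c)) * X ^ q ^ r) :
    ∀ k : ℕ, 1 ≤ k →
      ((fun g => g.comp h)^[k] X).Splits :=
  stmt_8_general q Fq hcard r hr c t T ht hT h hh
end
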